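/- arXiv:1904.09417 — 4 statements merged into one kernel-verified Lean document; each statement's English description precedes it below -/
import Mathlib

section
/- Let f : [0,1] → ℝ be continuous with f(0), f(1) ∈ ℤ, and let n ≥ 1. Then for every x ∈ [0,1], |B̂_n(f)(x) - B_n f(x)| ≤ 1/(2n), where B_n f(x) = Σ_{k=0}^n f(k/n) C(n,k) x^k (1-x)^{n-k} and B̂_n(f)(x) = Σ_{k=0}^n ⟨f(k/n) C(n,k)⟩ x^k (1-x)^{n-k}. -/
/-!
Rounding changes the `k`-th coefficient `f (k / n) * C(n, k)` by at most `1 / 2`, and not at all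
for `k = 0, n`, where it is already an integer. For `0 < k < n` we have `n ≤ C(n, k)`, so every
error is at most `C(n, k) / (2 n)`; weighting by `x ^ k * (1 - x) ^ (n - k)` and summing, the
binomial theorem bounds the total by `1 / (2 n)`.
-/

theorem Nat.le_choose_of_pos_of_lt : ∀ {n k : ℕ}, 0 < k → k < n → n ≤ n.choose k
  | n + 1, 1, _, _ => by simp
  | n + 1, k + 2, _, hkn => by
    have ih : n ≤ n.choose (k + 1) := le_choose_of_pos_of_lt k.succ_pos (by omega)
    have hpos : 0 < n.choose (k + 1 + 1) := Nat.choose_pos (by omega)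
    rw [Nat.choose_succ_succ']
    omega

theorem abs_round_mul_choose_sub_le {n k : ℕ} {y : ℝ} (hkn : k ≤ n)
    (hy : k = 0 ∨ k = n → ∃ m : ℤ, y = m) :
    |(round (y * n.choose k) : ℝ) - y * n.choose k| ≤ 1 / (2 * n) * n.choose k := by
  by_cases hk : k = 0 ∨ k = n
  · obtain ⟨m, rfl⟩ := hy hk
    rw [← Int.cast_natCast, ← Int.cast_mul, round_intCast, sub_self, abs_zero]
    positivity
  · obtain ⟨hk0, hkn'⟩ := not_or.1 hk
    have hn : (n : ℝ) ≤ n.choose k :=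
      mod_cast Nat.le_choose_of_pos_of_lt (Nat.pos_of_ne_zero hk0) (lt_of_le_of_ne hkn hkn')
    have hnpos : (0 : ℝ) < n := by exact_mod_cast (show 0 < n by omega)
    calc |(round (y * n.choose k) : ℝ) - y * n.choose k| ≤ 1 / 2 := by
          rw [abs_sub_comm]; exact abs_sub_round _
      _ ≤ 1 / (2 * n) * n.choose k := by
          rw [div_mul_eq_mul_div, one_mul, le_div_iff₀ (by positivity)]
          linarith

theorem abs_sum_mul_bernstein_le {n : ℕ} {x ε : ℝ} (hx : x ∈ Set.Icc (0 : ℝ) 1) (e : ℕ → ℝ)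
    (he : ∀ k ≤ n, |e k| ≤ ε * n.choose k) :
    |∑ k ∈ Finset.range (n + 1), e k * x ^ k * (1 - x) ^ (n - k)| ≤ ε := by
  have hw : ∀ k, 0 ≤ x ^ k * (1 - x) ^ (n - k) := fun k => by
    have := hx.1; have : 0 ≤ 1 - x := sub_nonneg.2 hx.2; positivity
  calc |∑ k ∈ Finset.range (n + 1), e k * x ^ k * (1 - x) ^ (n - k)|
      ≤ ∑ k ∈ Finset.range (n + 1), |e k| * (x ^ k * (1 - x) ^ (n - k)) := by
        refine (Finset.abs_sum_le_sum_abs _ _).trans_eq (Finset.sum_congr rfl fun k _ => ?_)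
        rw [mul_assoc, abs_mul, abs_of_nonneg (hw k)]
    _ ≤ ∑ k ∈ Finset.range (n + 1), ε * n.choose k * (x ^ k * (1 - x) ^ (n - k)) :=
        Finset.sum_le_sum fun k hk =>
          mul_le_mul_of_nonneg_right (he k (Nat.lt_succ_iff.1 (Finset.mem_range.1 hk))) (hw k)
    _ = ε * (x + (1 - x)) ^ n := by
        rw [add_pow, Finset.mul_sum]
        exact Finset.sum_congr rfl fun k _ => by ring
    _ = ε := by simp

theorem round_bernstein_close_general (f : ℝ → ℝ)
    (h0 : ∃ m : ℤ, f 0 = (m : ℝ)) (h1 : ∃ m : ℤ, f 1 = (m : ℝ))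
    (n : ℕ) (x : ℝ) (hx : x ∈ Set.Icc (0 : ℝ) 1) :
    |(∑ k ∈ Finset.range (n + 1),
        ((round (f ((k : ℝ) / n) * (n.choose k : ℝ)) : ℝ)) * x ^ k * (1 - x) ^ (n - k)) -
      (∑ k ∈ Finset.range (n + 1),
        f ((k : ℝ) / n) * (n.choose k : ℝ) * x ^ k * (1 - x) ^ (n - k))| ≤ 1 / (2 * n) := by
  rw [← Finset.sum_sub_distrib]
  simp only [← sub_mul]
  refine abs_sum_mul_bernstein_le hx _ fun k hkn => abs_round_mul_choose_sub_le hkn ?_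
  rintro (rfl | rfl)
  · simpa using h0
  · obtain rfl | hk := eq_or_ne k 0
    · simpa using h0
    · simpa [div_self (Nat.cast_ne_zero.2 hk : (k : ℝ) ≠ 0)] using h1

theorem round_bernstein_close (f : ℝ → ℝ) (hf : ContinuousOn f (Set.Icc 0 1))
    (h0 : ∃ m : ℤ, f 0 = (m : ℝ)) (h1 : ∃ m : ℤ, f 1 = (m : ℝ))
    (n : ℕ) (hn : 1 ≤ n) (x : ℝ) (hx : x ∈ Set.Icc (0 : ℝ) 1) :
    |(∑ k ∈ Finset.range (n + 1),
        ((round (f ((k : ℝ) / n) * (n.choose k : ℝ)) : ℝ)) * x ^ k * (1 - x) ^ (n - k)) -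
      (∑ k ∈ Finset.range (n + 1),
        f ((k : ℝ) / n) * (n.choose k : ℝ) * x ^ k * (1 - x) ^ (n - k))| ≤ 1 / (2 * n) :=
  round_bernstein_close_general f h0 h1 n x hx
end

section
/- Let f : [0,1] → ℝ be continuous with f(0), f(1) ∈ ℤ and fix δ ∈ (0, 1/2). Then for all x ∈ [δ, 1-δ] and n ≥ 1, |B_n f(x) - B̂_n(f)(x)| ≤ ((n-1)/2)·(1-δ)^n, where B̂_n(f)(x) = Σ_{k=0}^n ⟨f(k/n)C(n,k)⟩ x^k (1-x)^{n-k}. -/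
/-! Rounding changes each coefficient `f(k/n) C(n,k)` by at most `1/2`, and not at all for
`k = 0, n`, where it is already an integer. Each of the `n - 1` remaining basis polynomials
`x^k (1-x)^(n-k)` is at most `(1-δ)^n` in absolute value, since both `|x|` and `|1-x|` are. -/

open Finset

theorem abs_pow_mul_one_sub_pow_le {x c : ℝ} (hx : |x| ≤ c) (h1x : |1 - x| ≤ c) {k n : ℕ}
    (hk : k ≤ n) : |x ^ k * (1 - x) ^ (n - k)| ≤ c ^ n := by
  have hc : 0 ≤ c := (abs_nonneg x).trans hx
  calc |x ^ k * (1 - x) ^ (n - k)| = |x| ^ k * |1 - x| ^ (n - k) := by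
        rw [abs_mul, abs_pow, abs_pow]
    _ ≤ c ^ k * c ^ (n - k) := by gcongr
    _ = c ^ n := by rw [← pow_add, Nat.add_sub_cancel' hk]

theorem abs_sum_sub_round_mul_le {ι : Type*} (s : Finset ι) (a b : ι → ℝ) {C : ℝ}
    (hb : ∀ i ∈ s, |b i| ≤ C) : |∑ i ∈ s, (a i - round (a i)) * b i| ≤ #s * (C / 2) := by
  calc |∑ i ∈ s, (a i - round (a i)) * b i| ≤ ∑ i ∈ s, |(a i - round (a i)) * b i| :=
        abs_sum_le_sum_abs _ _
    _ ≤ #s • (C / 2) := sum_le_card_nsmul _ _ _ fun i hi => by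
        rw [abs_mul, mul_comm, div_eq_mul_one_div]
        exact mul_le_mul (hb i hi) (abs_sub_round (a i)) (abs_nonneg _)
          ((abs_nonneg _).trans (hb i hi))
    _ = #s * (C / 2) := nsmul_eq_mul _ _

theorem round_bernstein_geometric_general (f : ℝ → ℝ)
    (h0 : ∃ m : ℤ, f 0 = (m : ℝ)) (h1 : ∃ m : ℤ, f 1 = (m : ℝ))
    (δ : ℝ)
    (x : ℝ) (hx : x ∈ Set.Icc δ (1 - δ)) (n : ℕ) (hn : 1 ≤ n) :
    |(∑ k ∈ Finset.range (n + 1),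
        f ((k : ℝ) / n) * (n.choose k : ℝ) * x ^ k * (1 - x) ^ (n - k)) -
      (∑ k ∈ Finset.range (n + 1),
        ((round (f ((k : ℝ) / n) * (n.choose k : ℝ)) : ℝ)) * x ^ k * (1 - x) ^ (n - k))| ≤
      (((n : ℝ) - 1) / 2) * (1 - δ) ^ n := by
  obtain ⟨m0, hm0⟩ := h0
  obtain ⟨m1, hm1⟩ := h1
  obtain ⟨hδx, hx1δ⟩ := hx
  set a : ℕ → ℝ := fun k => f ((k : ℝ) / n) * (n.choose k : ℝ)
  have boundary_vanish : ∀ k ∈ range (n + 1), k ∉ Ioo 0 n →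
      (a k - round (a k)) * (x ^ k * (1 - x) ^ (n - k)) = 0 := by
    intro k hk hk'
    obtain rfl | rfl : k = 0 ∨ n = k := by simp only [mem_range, mem_Ioo] at hk hk'; omega
    · simp [a, hm0]
    · have hn0 : (n : ℝ) ≠ 0 := Nat.cast_ne_zero.mpr (by omega)
      simp [a, div_self hn0, hm1]
  rw [← sum_sub_distrib]
  calc _ = |∑ k ∈ Ioo 0 n, (a k - round (a k)) * (x ^ k * (1 - x) ^ (n - k))| := by
        rw [sum_subset (fun k hk => by simp only [mem_Ioo, mem_range] at hk ⊢; omega)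
          boundary_vanish]
        congr 1; exact sum_congr rfl fun k _ => by ring
    _ ≤ #(Ioo 0 n) * ((1 - δ) ^ n / 2) := abs_sum_sub_round_mul_le _ _ _ fun k hk =>
        abs_pow_mul_one_sub_pow_le (abs_le.mpr ⟨by linarith, hx1δ⟩)
          (abs_le.mpr ⟨by linarith, by linarith⟩) (mem_Ioo.mp hk).2.le
    _ = _ := by rw [Nat.card_Ioo, Nat.sub_zero, Nat.cast_sub hn]; ring

theorem round_bernstein_geometric (f : ℝ → ℝ) (hf : ContinuousOn f (Set.Icc 0 1))
    (h0 : ∃ m : ℤ, f 0 = (m : ℝ)) (h1 : ∃ m : ℤ, f 1 = (m : ℝ))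
    (δ : ℝ) (hδ0 : 0 < δ) (hδ1 : δ < 1 / 2)
    (x : ℝ) (hx : x ∈ Set.Icc δ (1 - δ)) (n : ℕ) (hn : 1 ≤ n) :
    |(∑ k ∈ Finset.range (n + 1),
        f ((k : ℝ) / n) * (n.choose k : ℝ) * x ^ k * (1 - x) ^ (n - k)) -
      (∑ k ∈ Finset.range (n + 1),
        ((round (f ((k : ℝ) / n) * (n.choose k : ℝ)) : ℝ)) * x ^ k * (1 - x) ^ (n - k))| ≤
      (((n : ℝ) - 1) / 2) * (1 - δ) ^ n :=
  round_bernstein_geometric_general f h0 h1 δ x hx n hn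
end

section
/- Let f : [0,1] → ℝ be continuous with f(0), f(1) ∈ ℤ. If ‖B̂_n(f) - f‖_∞ = o(1/n) as n → ∞ (i.e., n·‖B̂_n(f) - f‖_∞ → 0), then f(x) = p x + q for some integers p, q. -/
/-!
The rounding error of `B̂ₙ f` is at most `(n + 1)/2 · max(x, 1 - x)ⁿ`, which is `o(1/n)` at interior
points, so `n (Bₙ f - f) → 0` on `(0, 1)`. Subtracting the chord through the endpoints, assume
`f(0) = f(1) = 0` and `f(ξ) = ε > 0`. Then `g = f - ε y(1 - y)` has a positive, hence interior,
maximum at some `x₀`. Since `Bₙ` is positive, fixes affine functions and maps `y(1 - y)` to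
`(1 - 1/n) y(1 - y)`, `Bₙ g(x₀) ≤ g(x₀)` gives `n (Bₙ f(x₀) - f(x₀)) ≤ -ε x₀(1 - x₀)` for every `n`,
a contradiction. So `f` is the chord, whose coefficients are integers because `f(0), f(1)` are.
-/

open Finset Filter Topology

noncomputable def bernsteinOperator (n : ℕ) (g : ℝ → ℝ) (x : ℝ) : ℝ :=
  ∑ k ∈ range (n + 1), g (k / n) * (bernsteinPolynomial ℝ n k).eval x

lemma bernsteinPolynomial_eval_eq (n k : ℕ) (x : ℝ) :
    (bernsteinPolynomial ℝ n k).eval x = n.choose k * x ^ k * (1 - x) ^ (n - k) := by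
  simp [bernsteinPolynomial]

lemma bernsteinPolynomial_eval_nonneg (n k : ℕ) {x : ℝ} (hx : x ∈ Set.Icc (0 : ℝ) 1) :
    0 ≤ (bernsteinPolynomial ℝ n k).eval x := by
  have : 0 ≤ 1 - x := sub_nonneg.2 hx.2
  have := hx.1
  rw [bernsteinPolynomial_eval_eq]
  positivity

namespace bernsteinOperator

variable {n : ℕ}

lemma sub (n : ℕ) (g h : ℝ → ℝ) (x : ℝ) :
    bernsteinOperator n (fun y => g y - h y) x = bernsteinOperator n g x - bernsteinOperator n h x := by
  simp only [bernsteinOperator, sub_mul, sum_sub_distrib]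

lemma add (n : ℕ) (g h : ℝ → ℝ) (x : ℝ) :
    bernsteinOperator n (fun y => g y + h y) x = bernsteinOperator n g x + bernsteinOperator n h x := by
  simp only [bernsteinOperator, add_mul, sum_add_distrib]

lemma const_mul (n : ℕ) (c : ℝ) (g : ℝ → ℝ) (x : ℝ) :
    bernsteinOperator n (fun y => c * g y) x = c * bernsteinOperator n g x := by
  simp only [bernsteinOperator, mul_sum, mul_assoc]

lemma const (n : ℕ) (c x : ℝ) : bernsteinOperator n (fun _ => c) x = c := by
  have h := congrArg (Polynomial.eval x) (bernsteinPolynomial.sum ℝ n)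
  simp only [Polynomial.eval_finsetSum, Polynomial.eval_one] at h
  rw [bernsteinOperator, ← mul_sum, h, mul_one]

lemma id (hn : n ≠ 0) (x : ℝ) : bernsteinOperator n (fun y => y) x = x := by
  have h := congrArg (Polynomial.eval x) (bernsteinPolynomial.sum_smul ℝ n)
  simp only [Polynomial.eval_finsetSum, nsmul_eq_mul, Polynomial.eval_mul, Polynomial.eval_natCast,
    Polynomial.eval_X] at h
  simp only [bernsteinOperator, div_mul_eq_mul_div, ← sum_div, h]
  field_simp

lemma variance (hn : n ≠ 0) (x : ℝ) :
    bernsteinOperator n (fun y => (x - y) ^ 2) x = x * (1 - x) / n := by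
  have h := congrArg (Polynomial.eval x) (bernsteinPolynomial.variance ℝ n)
  simp only [Polynomial.eval_finsetSum, nsmul_eq_mul, Polynomial.eval_mul, Polynomial.eval_natCast,
    Polynomial.eval_X, Polynomial.eval_pow, Polynomial.eval_sub, Polynomial.eval_one] at h
  have hn' : (n : ℝ) ≠ 0 := Nat.cast_ne_zero.2 hn
  have hterm : ∀ k : ℕ, (x - k / n) ^ 2 * (bernsteinPolynomial ℝ n k).eval x
      = (n * x - k) ^ 2 * (bernsteinPolynomial ℝ n k).eval x / n ^ 2 := by
    intro k
    field_simp
  simp only [bernsteinOperator, hterm, ← sum_div, h]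
  field_simp

lemma affine (hn : n ≠ 0) (a b x : ℝ) : bernsteinOperator n (fun y => a + b * y) x = a + b * x := by
  rw [add, const, const_mul, id hn]

lemma parabola (hn : n ≠ 0) (x : ℝ) :
    bernsteinOperator n (fun y => y * (1 - y)) x = (1 - 1 / n) * (x * (1 - x)) := by
  have hsplit : (fun y : ℝ => y * (1 - y)) = fun y => (x ^ 2 + (1 - 2 * x) * y) - (x - y) ^ 2 := by
    funext y; ring
  rw [hsplit, sub, affine hn, variance hn]
  ring

lemma le_of_forall_le {x : ℝ} (hx : x ∈ Set.Icc (0 : ℝ) 1) {g : ℝ → ℝ} {c : ℝ}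
    (hg : ∀ y ∈ Set.Icc (0 : ℝ) 1, g y ≤ c) : bernsteinOperator n g x ≤ c := by
  calc bernsteinOperator n g x ≤ bernsteinOperator n (fun _ => c) x := by
        refine sum_le_sum fun k hk => mul_le_mul_of_nonneg_right (hg _ ⟨by positivity, ?_⟩)
          (bernsteinPolynomial_eval_nonneg n k hx)
        exact div_le_one_of_le₀ (by exact_mod_cast mem_range_succ_iff.1 hk) (Nat.cast_nonneg n)
    _ = c := const n c x

lemma mul_sub_le_of_isMaxOn (hn : n ≠ 0) {g : ℝ → ℝ} {ε x₀ : ℝ} (hx₀ : x₀ ∈ Set.Icc (0 : ℝ) 1)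
    (hmax : IsMaxOn (fun y => g y - ε * (y * (1 - y))) (Set.Icc 0 1) x₀) :
    n * (bernsteinOperator n g x₀ - g x₀) ≤ -ε * (x₀ * (1 - x₀)) := by
  have hB := le_of_forall_le (n := n) hx₀ fun y hy => hmax hy
  rw [sub, const_mul, parabola hn] at hB
  have hn' : (0 : ℝ) < n := Nat.cast_pos.2 (Nat.pos_of_ne_zero hn)
  have : n * (bernsteinOperator n g x₀ - g x₀) ≤ n * (-ε * (x₀ * (1 - x₀)) / n) := by
    gcongr
    field_simp at hB ⊢
    linarith
  rwa [mul_div_cancel₀ _ hn'.ne'] at this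

end bernsteinOperator

theorem nonpos_of_tendsto_bernsteinOperator {g : ℝ → ℝ} (hg : ContinuousOn g (Set.Icc 0 1))
    (h0 : g 0 = 0) (h1 : g 1 = 0)
    (hsat : ∀ x ∈ Set.Ioo (0 : ℝ) 1,
      Tendsto (fun n : ℕ => (n : ℝ) * (bernsteinOperator n g x - g x)) atTop (𝓝 0)) :
    ∀ x ∈ Set.Icc (0 : ℝ) 1, g x ≤ 0 := by
  intro xb hxb
  by_contra! hpos
  set ε := g xb
  obtain ⟨x₀, hx₀, hmax⟩ := isCompact_Icc.exists_isMaxOn (Set.nonempty_Icc.2 zero_le_one)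
    (hg.sub (by fun_prop : Continuous fun y : ℝ => ε * (y * (1 - y))).continuousOn)
  have hmax_pos : 0 < g x₀ - ε * (x₀ * (1 - x₀)) := by
    have : g xb - ε * (xb * (1 - xb)) ≤ g x₀ - ε * (x₀ * (1 - x₀)) := hmax hxb
    nlinarith [mul_nonneg hpos.le (sq_nonneg (xb - 1 / 2))]
  have hx₀' : x₀ ∈ Set.Ioo 0 1 := by
    refine ⟨lt_of_le_of_ne hx₀.1 ?_, lt_of_le_of_ne hx₀.2 ?_⟩ <;> rintro rfl <;>
      simp [h0, h1] at hmax_pos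
  have hlim := le_of_tendsto (hsat x₀ hx₀') (eventually_atTop.2
    ⟨1, fun n hn => bernsteinOperator.mul_sub_le_of_isMaxOn (by omega) hx₀ hmax⟩)
  have : 0 < x₀ * (1 - x₀) := mul_pos hx₀'.1 (sub_pos.2 hx₀'.2)
  nlinarith

theorem eq_affine_of_tendsto_bernsteinOperator {f : ℝ → ℝ} (hf : ContinuousOn f (Set.Icc 0 1))
    (hsat : ∀ x ∈ Set.Ioo (0 : ℝ) 1,
      Tendsto (fun n : ℕ => (n : ℝ) * (bernsteinOperator n f x - f x)) atTop (𝓝 0)) :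
    ∀ x ∈ Set.Icc (0 : ℝ) 1, f x = f 0 + (f 1 - f 0) * x := by
  have key : ∀ s : ℝ, ∀ x ∈ Set.Icc (0 : ℝ) 1, s * (f x - (f 0 + (f 1 - f 0) * x)) ≤ 0 := by
    intro s
    refine nonpos_of_tendsto_bernsteinOperator (by fun_prop) (by simp) (by ring) fun x hx => ?_
    refine ((hsat x hx).const_mul s).congr' (eventually_atTop.2 ⟨1, fun n hn => ?_⟩) |>.trans
      (by rw [mul_zero])
    rw [bernsteinOperator.const_mul, bernsteinOperator.sub, bernsteinOperator.affine (by omega)]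
    ring
  intro x hx
  linarith [key 1 x hx, key (-1) x hx]

noncomputable def roundedBernsteinOperator (n : ℕ) (f : ℝ → ℝ) (x : ℝ) : ℝ :=
  ∑ k ∈ range (n + 1), (round (f (k / n) * n.choose k) : ℝ) * x ^ k * (1 - x) ^ (n - k)

lemma pow_mul_pow_sub_le_max_pow {a b : ℝ} (ha : 0 ≤ a) (hb : 0 ≤ b) {k n : ℕ} (hk : k ≤ n) :
    a ^ k * b ^ (n - k) ≤ max a b ^ n := by
  calc a ^ k * b ^ (n - k) ≤ max a b ^ k * max a b ^ (n - k) := by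
        gcongr
        exacts [le_max_left a b, le_max_right a b]
    _ = max a b ^ n := by rw [← pow_add, Nat.add_sub_cancel' hk]

lemma abs_roundedBernsteinOperator_sub_le (n : ℕ) (f : ℝ → ℝ) {x : ℝ}
    (hx : x ∈ Set.Icc (0 : ℝ) 1) :
    |roundedBernsteinOperator n f x - bernsteinOperator n f x|
      ≤ (n + 1) / 2 * max x (1 - x) ^ n := by
  have hterm : ∀ k ∈ range (n + 1),
      |(round (f (k / n) * n.choose k) : ℝ) * x ^ k * (1 - x) ^ (n - k)
        - f (k / n) * (bernsteinPolynomial ℝ n k).eval x| ≤ 1 / 2 * max x (1 - x) ^ n := by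
    intro k hk
    set y := f (k / n) * n.choose k
    have hx' : 0 ≤ 1 - x := sub_nonneg.2 hx.2
    have heq : (round y : ℝ) * x ^ k * (1 - x) ^ (n - k) - f (k / n) * (bernsteinPolynomial ℝ n k).eval x
        = (round y - y) * (x ^ k * (1 - x) ^ (n - k)) := by
      rw [bernsteinPolynomial_eval_eq]; ring
    have hw : 0 ≤ x ^ k * (1 - x) ^ (n - k) := by have := hx.1; positivity
    rw [heq, abs_mul, abs_of_nonneg hw]
    gcongr
    · rw [abs_sub_comm]; exact abs_sub_round y
    · exact pow_mul_pow_sub_le_max_pow hx.1 (sub_nonneg.2 hx.2) (mem_range_succ_iff.1 hk)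
  calc |roundedBernsteinOperator n f x - bernsteinOperator n f x|
      ≤ ∑ k ∈ range (n + 1), |(round (f (k / n) * n.choose k) : ℝ) * x ^ k * (1 - x) ^ (n - k)
        - f (k / n) * (bernsteinPolynomial ℝ n k).eval x| := by
        rw [roundedBernsteinOperator, bernsteinOperator, ← sum_sub_distrib]
        exact abs_sum_le_sum_abs _ _
    _ ≤ (range (n + 1)).card • (1 / 2 * max x (1 - x) ^ n) := sum_le_card_nsmul _ _ _ hterm
    _ = (n + 1) / 2 * max x (1 - x) ^ n := by rw [card_range, nsmul_eq_mul]; push_cast; ring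

lemma tendsto_bernsteinOperator_of_tendsto_rounded {f : ℝ → ℝ} {x : ℝ}
    (hx : x ∈ Set.Ioo (0 : ℝ) 1)
    (h : Tendsto (fun n : ℕ => (n : ℝ) * (roundedBernsteinOperator n f x - f x)) atTop (𝓝 0)) :
    Tendsto (fun n : ℕ => (n : ℝ) * (bernsteinOperator n f x - f x)) atTop (𝓝 0) := by
  set r := max x (1 - x)
  have hr0 : 0 ≤ r := hx.1.le.trans (le_max_left _ _)
  have hr1 : r < 1 := max_lt hx.2 (by linarith [hx.1])
  have hbound : Tendsto (fun n : ℕ => (n : ℝ) * ((n + 1) / 2 * r ^ n)) atTop (𝓝 0) := by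
    have := ((tendsto_pow_const_mul_const_pow_of_lt_one 2 hr0 hr1).add
      (tendsto_pow_const_mul_const_pow_of_lt_one 1 hr0 hr1)).div_const 2
    rw [add_zero, zero_div] at this
    exact this.congr fun n => by ring
  have herr : Tendsto (fun n : ℕ => (n : ℝ) * (roundedBernsteinOperator n f x
      - bernsteinOperator n f x)) atTop (𝓝 0) := by
    refine squeeze_zero_norm (fun n => ?_) hbound
    rw [norm_mul, Real.norm_natCast, Real.norm_eq_abs]
    gcongr
    exact abs_roundedBernsteinOperator_sub_le n f (Set.Ioo_subset_Icc_self hx)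
  simpa using (h.sub herr).congr fun n => by ring

theorem round_bernstein_saturation (f : ℝ → ℝ) (hf : ContinuousOn f (Set.Icc 0 1))
    (h0 : ∃ m : ℤ, f 0 = (m : ℝ)) (h1 : ∃ m : ℤ, f 1 = (m : ℝ))
    (hlittle : ∀ ε > 0, ∃ N : ℕ, ∀ n ≥ N, ∀ x ∈ Set.Icc (0 : ℝ) 1,
      (n : ℝ) * |(∑ k ∈ Finset.range (n + 1),
        ((round (f ((k : ℝ) / n) * (n.choose k : ℝ)) : ℝ)) * x ^ k * (1 - x) ^ (n - k)) - f x| ≤ ε) :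
    ∃ p q : ℤ, ∀ x ∈ Set.Icc (0 : ℝ) 1, f x = (p : ℝ) * x + q := by
  obtain ⟨q, hq⟩ := h0
  obtain ⟨m, hm⟩ := h1
  have hsat : ∀ x ∈ Set.Ioo (0 : ℝ) 1,
      Tendsto (fun n : ℕ => (n : ℝ) * (bernsteinOperator n f x - f x)) atTop (𝓝 0) := by
    intro x hx
    refine tendsto_bernsteinOperator_of_tendsto_rounded hx (Metric.tendsto_atTop.2 fun ε hε => ?_)
    obtain ⟨N, hN⟩ := hlittle (ε / 2) (half_pos hε)
    refine ⟨N, fun n hn => ?_⟩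
    rw [Real.dist_0_eq_abs, abs_mul, Nat.abs_cast]
    exact (hN n hn x (Set.Ioo_subset_Icc_self hx)).trans_lt (half_lt_self hε)
  refine ⟨m - q, q, fun x hx => ?_⟩
  rw [eq_affine_of_tendsto_bernsteinOperator hf hsat x hx, hq, hm]
  push_cast
  ring
end

section
/- Let f : [0,1] → ℝ be continuous with f(0), f(1) ∈ ℤ. If ‖B̃_n(f) - f‖_∞ = o(1/n) as n → ∞, then f(x) = p x + q for some integers p, q, and consequently B̃_n(f) = f for all n ≥ 1. -/
/-!
Let `ℓ` be the affine function with `ℓ 0 = f 0` and `ℓ 1 = f 1`; it has integer coefficients, and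
put `g = f - ℓ`. If `g` is positive somewhere, take an interior maximum `x₀` of
`g - ε y(1-y)`. The Bernstein operator `Bₙ` is positive, reproduces affine functions and sends
`y(1-y)` to `x(1-x)(1 - 1/n)`, so `Bₙ g x₀ ≤ g x₀ - ε x₀(1-x₀)/n`; rounding down only lowers
`Bₙ f`, so `n (f - B̃ₙ f)(x₀)` stays above a positive constant. If `g` is negative somewhere, the
same argument applied to `-g` works because rounding lowers `Bₙ f x₀` by at most
`(n+1) max(x₀, 1-x₀)ⁿ = o(1/n)` at the interior point `x₀`. Hence `f = ℓ` on `[0,1]`, and then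
every coefficient `(p k/n + q) C(n,k) = p C(n-1,k-1) + q C(n,k)` is an integer, so
`B̃ₙ f = Bₙ ℓ = ℓ`.
-/

open Finset Filter Topology Set

namespace bernsteinPolynomial

variable {R : Type*} [CommRing R]

theorem sum_eval (n : ℕ) (x : R) :
    ∑ k ∈ range (n + 1), (bernsteinPolynomial R n k).eval x = 1 := by
  simpa [Polynomial.eval_finsetSum] using congrArg (Polynomial.eval x) (sum R n)

theorem sum_mul_eval (n : ℕ) (x : R) :
    ∑ k ∈ range (n + 1), (k : R) * (bernsteinPolynomial R n k).eval x = n * x := by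
  simpa [Polynomial.eval_finsetSum] using congrArg (Polynomial.eval x) (sum_smul R n)

theorem sum_sq_mul_eval (n : ℕ) (x : R) :
    ∑ k ∈ range (n + 1), (n * x - k) ^ 2 * (bernsteinPolynomial R n k).eval x
      = n * x * (1 - x) := by
  simpa [Polynomial.eval_finsetSum] using congrArg (Polynomial.eval x) (variance R n)

theorem eval_nonneg (n k : ℕ) {x : ℝ} (hx : x ∈ Icc (0 : ℝ) 1) :
    0 ≤ (bernsteinPolynomial ℝ n k).eval x := by
  have : 0 ≤ 1 - x := sub_nonneg.2 hx.2
  simp only [bernsteinPolynomial, Polynomial.eval_mul, Polynomial.eval_pow, Polynomial.eval_sub,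
    Polynomial.eval_one, Polynomial.eval_X, Polynomial.eval_natCast]
  have := hx.1
  positivity

end bernsteinPolynomial

theorem natCast_div_mem_Icc {k n : ℕ} (hk : k ≤ n) : (k : ℝ) / n ∈ Icc (0 : ℝ) 1 :=
  ⟨by positivity, div_le_one_of_le₀ (by exact_mod_cast hk) n.cast_nonneg⟩

noncomputable def bernsteinSum (f : ℝ → ℝ) (n : ℕ) (x : ℝ) : ℝ :=
  ∑ k ∈ range (n + 1), f (k / n) * (bernsteinPolynomial ℝ n k).eval x

noncomputable def floorBernstein (f : ℝ → ℝ) (n : ℕ) (x : ℝ) : ℝ :=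
  ∑ k ∈ range (n + 1), ((⌊f ((k : ℝ) / n) * (n.choose k : ℝ)⌋ : ℝ)) * x ^ k * (1 - x) ^ (n - k)

namespace bernsteinSum

theorem eq_sum (f : ℝ → ℝ) (n : ℕ) (x : ℝ) : bernsteinSum f n x =
    ∑ k ∈ range (n + 1), f ((k : ℝ) / n) * (n.choose k : ℝ) * x ^ k * (1 - x) ^ (n - k) := by
  simp only [bernsteinSum, bernsteinPolynomial, Polynomial.eval_mul, Polynomial.eval_pow,
    Polynomial.eval_sub, Polynomial.eval_one, Polynomial.eval_X, Polynomial.eval_natCast, mul_assoc]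

theorem add (f g : ℝ → ℝ) (n : ℕ) (x : ℝ) :
    bernsteinSum (fun y => f y + g y) n x = bernsteinSum f n x + bernsteinSum g n x := by
  simp only [bernsteinSum, add_mul, sum_add_distrib]

theorem sub (f g : ℝ → ℝ) (n : ℕ) (x : ℝ) :
    bernsteinSum (fun y => f y - g y) n x = bernsteinSum f n x - bernsteinSum g n x := by
  simp only [bernsteinSum, sub_mul, sum_sub_distrib]

theorem const_mul (c : ℝ) (f : ℝ → ℝ) (n : ℕ) (x : ℝ) :
    bernsteinSum (fun y => c * f y) n x = c * bernsteinSum f n x := by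
  simp only [bernsteinSum, mul_assoc, mul_sum]

theorem const (c : ℝ) (n : ℕ) (x : ℝ) : bernsteinSum (fun _ => c) n x = c := by
  rw [bernsteinSum, ← mul_sum, bernsteinPolynomial.sum_eval, mul_one]

theorem mono {f g : ℝ → ℝ} (hfg : ∀ y ∈ Icc (0 : ℝ) 1, f y ≤ g y) (n : ℕ) {x : ℝ}
    (hx : x ∈ Icc (0 : ℝ) 1) : bernsteinSum f n x ≤ bernsteinSum g n x :=
  sum_le_sum fun k hk => mul_le_mul_of_nonneg_right
    (hfg _ (natCast_div_mem_Icc (Nat.lt_succ_iff.1 (mem_range.1 hk))))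
    (bernsteinPolynomial.eval_nonneg n k hx)

theorem affine (a b : ℝ) {n : ℕ} (hn : n ≠ 0) (x : ℝ) :
    bernsteinSum (fun y => a * y + b) n x = a * x + b := by
  have hn' : (n : ℝ) ≠ 0 := Nat.cast_ne_zero.2 hn
  have hterm : ∀ k ∈ range (n + 1), (a * ((k : ℝ) / n) + b) * (bernsteinPolynomial ℝ n k).eval x
      = a / n * ((k : ℝ) * (bernsteinPolynomial ℝ n k).eval x)
        + b * (bernsteinPolynomial ℝ n k).eval x := fun k _ => by ring
  rw [bernsteinSum, sum_congr rfl hterm, sum_add_distrib, ← mul_sum, ← mul_sum,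
    bernsteinPolynomial.sum_mul_eval, bernsteinPolynomial.sum_eval]
  field_simp

theorem mul_one_sub {n : ℕ} (hn : n ≠ 0) (x : ℝ) :
    bernsteinSum (fun y => y * (1 - y)) n x = x * (1 - x) - x * (1 - x) / n := by
  have hn' : (n : ℝ) ≠ 0 := Nat.cast_ne_zero.2 hn
  have hterm : ∀ k ∈ range (n + 1),
      (k / n : ℝ) * (1 - k / n) * (bernsteinPolynomial ℝ n k).eval x
        = x * (1 - x) * (bernsteinPolynomial ℝ n k).eval x
          + (1 - 2 * x) / n * ((k : ℝ) * (bernsteinPolynomial ℝ n k).eval x)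
          - (1 - 2 * x) * x * (bernsteinPolynomial ℝ n k).eval x
          - 1 / n ^ 2 * ((n * x - k) ^ 2 * (bernsteinPolynomial ℝ n k).eval x) := fun k _ => by
    field_simp
    ring
  rw [bernsteinSum, sum_congr rfl hterm, sum_sub_distrib, sum_sub_distrib, sum_add_distrib,
    ← mul_sum, ← mul_sum, ← mul_sum, ← mul_sum, bernsteinPolynomial.sum_mul_eval,
    bernsteinPolynomial.sum_eval, bernsteinPolynomial.sum_sq_mul_eval]
  field_simp
  ring

end bernsteinSum

theorem pow_mul_one_sub_pow_le {x : ℝ} (hx : x ∈ Icc (0 : ℝ) 1) {k n : ℕ} (hk : k ≤ n) :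
    x ^ k * (1 - x) ^ (n - k) ≤ max x (1 - x) ^ n := by
  have h1x : 0 ≤ 1 - x := sub_nonneg.2 hx.2
  calc x ^ k * (1 - x) ^ (n - k) ≤ max x (1 - x) ^ k * max x (1 - x) ^ (n - k) := by
        gcongr
        · exact hx.1
        · exact le_max_left _ _
        · exact le_max_right _ _
    _ = max x (1 - x) ^ n := by rw [← pow_add, Nat.add_sub_cancel' hk]

theorem exists_intCast_eq_affine_mul_choose (p q : ℤ) {n : ℕ} (hn : n ≠ 0) (k : ℕ) :
    ∃ m : ℤ, ((p : ℝ) * ((k : ℝ) / n) + q) * (n.choose k : ℝ) = m := by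
  obtain ⟨n, rfl⟩ := Nat.exists_eq_add_one_of_ne_zero hn
  cases k with
  | zero => exact ⟨q, by simp⟩
  | succ k =>
    refine ⟨p * n.choose k + q * (n + 1).choose (k + 1), ?_⟩
    have hchoose : ((n + 1 : ℕ) : ℝ) * n.choose k = (n + 1).choose (k + 1) * (k + 1 : ℕ) := by
      exact_mod_cast Nat.add_one_mul_choose_eq n k
    push_cast at hchoose ⊢
    field_simp
    linear_combination -(p : ℝ) * hchoose

namespace floorBernstein

theorem congr {f g : ℝ → ℝ} (hfg : ∀ y ∈ Icc (0 : ℝ) 1, f y = g y) (n : ℕ) (x : ℝ) :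
    floorBernstein f n x = floorBernstein g n x :=
  sum_congr rfl fun k hk => by
    rw [hfg _ (natCast_div_mem_Icc (Nat.lt_succ_iff.1 (mem_range.1 hk)))]

theorem le_bernsteinSum (f : ℝ → ℝ) (n : ℕ) {x : ℝ} (hx : x ∈ Icc (0 : ℝ) 1) :
    floorBernstein f n x ≤ bernsteinSum f n x := by
  have h1x : 0 ≤ 1 - x := sub_nonneg.2 hx.2
  have := hx.1
  rw [bernsteinSum.eq_sum, floorBernstein]
  gcongr
  exact Int.floor_le _

theorem bernsteinSum_sub_le (f : ℝ → ℝ) (n : ℕ) {x : ℝ} (hx : x ∈ Icc (0 : ℝ) 1) :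
    bernsteinSum f n x - (n + 1) * max x (1 - x) ^ n ≤ floorBernstein f n x := by
  have h1x : 0 ≤ 1 - x := sub_nonneg.2 hx.2
  have := hx.1
  have hterm : ∀ k ∈ range (n + 1),
      f ((k : ℝ) / n) * (n.choose k : ℝ) * x ^ k * (1 - x) ^ (n - k)
        ≤ (⌊f ((k : ℝ) / n) * (n.choose k : ℝ)⌋ : ℝ) * x ^ k * (1 - x) ^ (n - k)
          + max x (1 - x) ^ n := fun k hk => by
    have hfloor := (Int.lt_floor_add_one (f ((k : ℝ) / n) * (n.choose k : ℝ))).le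
    have hw := pow_mul_one_sub_pow_le hx (Nat.lt_succ_iff.1 (mem_range.1 hk))
    have hw0 : 0 ≤ x ^ k * (1 - x) ^ (n - k) := by positivity
    nlinarith [mul_le_mul_of_nonneg_right hfloor hw0]
  have := sum_le_sum hterm
  rw [sum_add_distrib, sum_const, card_range, nsmul_eq_mul] at this
  rw [bernsteinSum.eq_sum, floorBernstein]
  push_cast at this
  linarith

theorem eq_bernsteinSum {f : ℝ → ℝ} {n : ℕ}
    (hint : ∀ k ∈ range (n + 1), ∃ m : ℤ, f ((k : ℝ) / n) * (n.choose k : ℝ) = m) (x : ℝ) :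
    floorBernstein f n x = bernsteinSum f n x := by
  rw [bernsteinSum.eq_sum]
  refine sum_congr rfl fun k hk => ?_
  obtain ⟨m, hm⟩ := hint k hk
  rw [hm, Int.floor_intCast]

theorem affine_intCast (p q : ℤ) {n : ℕ} (hn : n ≠ 0) (x : ℝ) :
    floorBernstein (fun y => p * y + q) n x = p * x + q := by
  rw [eq_bernsteinSum (fun k _ => exists_intCast_eq_affine_mul_choose p q hn k),
    bernsteinSum.affine _ _ hn]

end floorBernstein

theorem exists_bernsteinSum_le_sub_div {g : ℝ → ℝ} (hg : ContinuousOn g (Icc 0 1))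
    (hg0 : g 0 = 0) (hg1 : g 1 = 0) (hpos : ∃ x ∈ Icc (0 : ℝ) 1, 0 < g x) :
    ∃ x₀ ∈ Ioo (0 : ℝ) 1, ∃ c > 0, ∀ n : ℕ, n ≠ 0 → bernsteinSum g n x₀ ≤ g x₀ - c / n := by
  obtain ⟨x₁, hx₁, hgx₁⟩ := hpos
  set ε := g x₁
  set h : ℝ → ℝ := fun y => g y - ε * (y * (1 - y)) with h_def
  have hh : ContinuousOn h (Icc 0 1) := hg.sub (by fun_prop)
  obtain ⟨x₀, hx₀, hmax⟩ := isCompact_Icc.exists_isMaxOn (nonempty_Icc.2 zero_le_one) hh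
  have hhx₁ : 0 < h x₁ := by
    have : x₁ * (1 - x₁) < 1 := by nlinarith [hx₁.1, hx₁.2]
    simp only [h_def]
    nlinarith
  have hhx₀ : 0 < h x₀ := hhx₁.trans_le (hmax hx₁)
  have hx₀' : x₀ ∈ Ioo (0 : ℝ) 1 := by
    refine ⟨hx₀.1.lt_of_ne ?_, hx₀.2.lt_of_ne ?_⟩ <;> rintro rfl <;> simp [h_def, hg0, hg1] at hhx₀
  refine ⟨x₀, hx₀', ε * (x₀ * (1 - x₀)), mul_pos hgx₁ (mul_pos hx₀'.1 (sub_pos.2 hx₀'.2)),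
    fun n hn => ?_⟩
  have hsplit : bernsteinSum g n x₀
      = bernsteinSum h n x₀ + ε * bernsteinSum (fun y => y * (1 - y)) n x₀ := by
    rw [← bernsteinSum.const_mul, ← bernsteinSum.add]
    simp only [h_def, sub_add_cancel]
  calc bernsteinSum g n x₀
      ≤ h x₀ + ε * (x₀ * (1 - x₀) - x₀ * (1 - x₀) / n) := by
        rw [hsplit, bernsteinSum.mul_one_sub hn, ← bernsteinSum.const (h x₀) n x₀]
        gcongr
        exact bernsteinSum.mono (fun y hy => hmax hy) n hx₀
    _ = g x₀ - ε * (x₀ * (1 - x₀)) / n := by simp only [h_def]; ring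

theorem le_affine_of_tendsto_floorBernstein {f : ℝ → ℝ} (hf : ContinuousOn f (Icc 0 1))
    {a b : ℝ} (h0 : f 0 = b) (h1 : f 1 = a + b)
    (hlim : ∀ x ∈ Icc (0 : ℝ) 1,
      Tendsto (fun n : ℕ => n * (floorBernstein f n x - f x)) atTop (𝓝 0)) :
    ∀ x ∈ Icc (0 : ℝ) 1, f x ≤ a * x + b := by
  by_contra! hgt
  obtain ⟨x₀, hx₀, c, hc, hle⟩ := exists_bernsteinSum_le_sub_div (g := fun y => f y - (a * y + b))
    (hf.sub (by fun_prop)) (by simp [h0]) (by simp [h1])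
    (hgt.imp fun x ⟨hx, hlt⟩ => ⟨hx, sub_pos.2 hlt⟩)
  have hx₀' := Ioo_subset_Icc_self hx₀
  have hbound : ∀ᶠ n : ℕ in atTop, (n : ℝ) * (floorBernstein f n x₀ - f x₀) ≤ -c := by
    filter_upwards [eventually_ne_atTop 0] with n hn
    have hB := hle n hn
    rw [bernsteinSum.sub, bernsteinSum.affine a b hn] at hB
    have hF := floorBernstein.le_bernsteinSum f n hx₀'
    have : floorBernstein f n x₀ - f x₀ ≤ -c / n := by rw [neg_div]; linarith
    calc (n : ℝ) * (floorBernstein f n x₀ - f x₀) ≤ n * (-c / n) := by gcongr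
      _ = -c := by field_simp
  linarith [le_of_tendsto (hlim x₀ hx₀') hbound]

theorem tendsto_mul_add_one_mul_pow {t : ℝ} (ht₀ : 0 ≤ t) (ht₁ : t < 1) :
    Tendsto (fun n : ℕ => (n : ℝ) * ((n + 1) * t ^ n)) atTop (𝓝 0) := by
  have := (tendsto_pow_const_mul_const_pow_of_lt_one 2 ht₀ ht₁).add
    (tendsto_pow_const_mul_const_pow_of_lt_one 1 ht₀ ht₁)
  rw [add_zero] at this
  exact this.congr fun n => by ring

theorem affine_le_of_tendsto_floorBernstein {f : ℝ → ℝ} (hf : ContinuousOn f (Icc 0 1))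
    {a b : ℝ} (h0 : f 0 = b) (h1 : f 1 = a + b)
    (hlim : ∀ x ∈ Icc (0 : ℝ) 1,
      Tendsto (fun n : ℕ => n * (floorBernstein f n x - f x)) atTop (𝓝 0)) :
    ∀ x ∈ Icc (0 : ℝ) 1, a * x + b ≤ f x := by
  by_contra! hlt
  obtain ⟨x₀, hx₀, c, hc, hle⟩ := exists_bernsteinSum_le_sub_div (g := fun y => a * y + b - f y)
    ((by fun_prop : ContinuousOn (fun y : ℝ => a * y + b) _).sub hf) (by simp [h0])
    (by simp [h1]) (hlt.imp fun x ⟨hx, hlt⟩ => ⟨hx, sub_pos.2 hlt⟩)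
  have hx₀' := Ioo_subset_Icc_self hx₀
  set t := max x₀ (1 - x₀)
  have ht₀ : 0 ≤ t := hx₀.1.le.trans (le_max_left _ _)
  have ht₁ : t < 1 := max_lt hx₀.2 (by linarith [hx₀.1])
  have hbound : ∀ᶠ n : ℕ in atTop,
      c - (n : ℝ) * ((n + 1) * t ^ n) ≤ n * (floorBernstein f n x₀ - f x₀) := by
    filter_upwards [eventually_ne_atTop 0] with n hn
    have hB := hle n hn
    rw [bernsteinSum.sub, bernsteinSum.affine a b hn] at hB
    have hF := floorBernstein.bernsteinSum_sub_le f n hx₀'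
    have : c / n - (n + 1) * t ^ n ≤ floorBernstein f n x₀ - f x₀ := by linarith
    calc c - (n : ℝ) * ((n + 1) * t ^ n) = n * (c / n - (n + 1) * t ^ n) := by field_simp
      _ ≤ n * (floorBernstein f n x₀ - f x₀) := by gcongr
  have := le_of_tendsto_of_tendsto
    (tendsto_const_nhds.sub (tendsto_mul_add_one_mul_pow ht₀ ht₁)) (hlim x₀ hx₀') hbound
  linarith

theorem floor_bernstein_saturation (f : ℝ → ℝ) (hf : ContinuousOn f (Set.Icc 0 1))
    (h0 : ∃ m : ℤ, f 0 = (m : ℝ)) (h1 : ∃ m : ℤ, f 1 = (m : ℝ))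
    (hlittle : ∀ ε > 0, ∃ N : ℕ, ∀ n ≥ N, ∀ x ∈ Set.Icc (0 : ℝ) 1,
      (n : ℝ) * |(∑ k ∈ Finset.range (n + 1),
        ((⌊f ((k : ℝ) / n) * (n.choose k : ℝ)⌋ : ℝ)) * x ^ k * (1 - x) ^ (n - k)) - f x| ≤ ε) :
    ∃ p q : ℤ, (∀ x ∈ Set.Icc (0 : ℝ) 1, f x = (p : ℝ) * x + q) ∧
      ∀ n : ℕ, 1 ≤ n → ∀ x ∈ Set.Icc (0 : ℝ) 1,
        (∑ k ∈ Finset.range (n + 1),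
          ((⌊f ((k : ℝ) / n) * (n.choose k : ℝ)⌋ : ℝ)) * x ^ k * (1 - x) ^ (n - k)) = f x := by
  obtain ⟨q, hq⟩ := h0
  obtain ⟨p, hp⟩ := h1
  have hp' : f 1 = ((p - q : ℤ) : ℝ) + q := by push_cast; linarith
  have hlim : ∀ x ∈ Icc (0 : ℝ) 1,
      Tendsto (fun n : ℕ => n * (floorBernstein f n x - f x)) atTop (𝓝 0) := fun x hx =>
    Metric.tendsto_atTop.2 fun ε hε => (hlittle (ε / 2) (half_pos hε)).imp fun N hN n hn => by
      rw [Real.dist_eq, sub_zero, abs_mul, Nat.abs_cast]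
      exact (hN n hn x hx).trans_lt (half_lt_self hε)
  have hf_eq : ∀ x ∈ Icc (0 : ℝ) 1, f x = ((p - q : ℤ) : ℝ) * x + q := fun x hx =>
    le_antisymm (le_affine_of_tendsto_floorBernstein hf hq hp' hlim x hx)
      (affine_le_of_tendsto_floorBernstein hf hq hp' hlim x hx)
  refine ⟨p - q, q, hf_eq, fun n hn x hx => ?_⟩
  change floorBernstein f n x = f x
  rw [floorBernstein.congr hf_eq, floorBernstein.affine_intCast _ _ (by omega), hf_eq x hx]
end
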